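/- arXiv:2307.07279 — 2 statements merged into one kernel-verified Lean document; each statement's English description precedes it below -/
import Mathlib

section
/- Let G be a connected chordal finite simple graph with at least 2 vertices and let v be a vertex of G. Then v is an F-branch leaf of some BFS ordering of G if and only if the induced subgraph G[N(v)] has radius at most two, i.e., there is a vertex w ∈ N(v) such that every vertex of N(v) is at distance at most 2 from w in G[N(v)]. -/
open SimpleGraph

variable {V : Type*}

/-- A generic search (GS) ordering: every vertex other than the first has an
earlier neighbor. -/
def IsGSOrdering [Fintype V] (G : SimpleGraph V) (σ : Fin (Fintype.card V) ≃ V) : Prop :=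
  ∀ w : V, (σ.symm w).val ≠ 0 → ∃ u : V, σ.symm u < σ.symm w ∧ G.Adj u w

/-- DFS ordering (Corneil–Krueger four-point characterization). -/
def IsDFSOrdering [Fintype V] (G : SimpleGraph V) (σ : Fin (Fintype.card V) ≃ V) : Prop :=
  IsGSOrdering G σ ∧ ∀ a b c : V, σ.symm a < σ.symm b → σ.symm b < σ.symm c →
    G.Adj a c → ¬ G.Adj a b →
      ∃ d : V, σ.symm a < σ.symm d ∧ σ.symm d < σ.symm b ∧ G.Adj d b

/-- BFS ordering (Corneil–Krueger four-point characterization). -/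
def IsBFSOrdering [Fintype V] (G : SimpleGraph V) (σ : Fin (Fintype.card V) ≃ V) : Prop :=
  IsGSOrdering G σ ∧ ∀ a b c : V, σ.symm a < σ.symm b → σ.symm b < σ.symm c →
    G.Adj a c → ¬ G.Adj a b →
      ∃ d : V, σ.symm d < σ.symm a ∧ G.Adj d b

/-- LDFS ordering (Corneil–Krueger four-point characterization). -/
def IsLDFSOrdering [Fintype V] (G : SimpleGraph V) (σ : Fin (Fintype.card V) ≃ V) : Prop :=
  IsGSOrdering G σ ∧ ∀ a b c : V, σ.symm a < σ.symm b → σ.symm b < σ.symm c →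
    G.Adj a c → ¬ G.Adj a b →
      ∃ d : V, σ.symm a < σ.symm d ∧ σ.symm d < σ.symm b ∧ G.Adj d b ∧ ¬ G.Adj d c

/-- MNS ordering (Corneil–Krueger four-point characterization). -/
def IsMNSOrdering [Fintype V] (G : SimpleGraph V) (σ : Fin (Fintype.card V) ≃ V) : Prop :=
  IsGSOrdering G σ ∧ ∀ a b c : V, σ.symm a < σ.symm b → σ.symm b < σ.symm c →
    G.Adj a c → ¬ G.Adj a b →
      ∃ d : V, σ.symm d < σ.symm b ∧ G.Adj d b ∧ ¬ G.Adj d c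

/-- MCS ordering: for positions `i < j`, the vertex at position `i` has at least as many
neighbors among the vertices at positions `< i` as the vertex at position `j` has. -/
def IsMCSOrdering [Fintype V] (G : SimpleGraph V) (σ : Fin (Fintype.card V) ≃ V) : Prop :=
  ∀ i j : Fin (Fintype.card V), i < j →
    Nat.card {k : Fin (Fintype.card V) // k < i ∧ G.Adj (σ k) (σ j)} ≤
    Nat.card {k : Fin (Fintype.card V) // k < i ∧ G.Adj (σ k) (σ i)}

/-- A perfect elimination ordering: the earlier neighbors of any vertex form a clique. -/
def IsPEO [Fintype V] (G : SimpleGraph V) (σ : Fin (Fintype.card V) ≃ V) : Prop :=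
  ∀ u v w : V, σ.symm u < σ.symm w → σ.symm v < σ.symm w → u ≠ v →
    G.Adj u w → G.Adj v w → G.Adj u v

/-- `u` is the F-parent of `v`: `v` is not the first vertex and `u` is the earliest
neighbor of `v` in the ordering. -/
def FParent [Fintype V] (G : SimpleGraph V) (σ : Fin (Fintype.card V) ≃ V) (u v : V) : Prop :=
  (σ.symm v).val ≠ 0 ∧ G.Adj u v ∧ ∀ w : V, G.Adj w v → σ.symm u ≤ σ.symm w

/-- `u` is the L-parent of `v`: `v` is not the first vertex and `u` is the last
neighbor of `v` occurring before `v` in the ordering. -/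
def LParent [Fintype V] (G : SimpleGraph V) (σ : Fin (Fintype.card V) ≃ V) (u v : V) : Prop :=
  (σ.symm v).val ≠ 0 ∧ G.Adj u v ∧ σ.symm u < σ.symm v ∧
    ∀ w : V, G.Adj w v → σ.symm w < σ.symm v → σ.symm w ≤ σ.symm u

/-- `v` is an F-branch leaf: `v` is not the first vertex and is the F-parent of no vertex. -/
def FBranchLeaf [Fintype V] (G : SimpleGraph V) (σ : Fin (Fintype.card V) ≃ V) (v : V) : Prop :=
  (σ.symm v).val ≠ 0 ∧ ∀ w : V, ¬ FParent G σ v w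

/-- `v` is the F-root leaf: `v` is the first vertex and is the F-parent of exactly one vertex. -/
def FRootLeaf [Fintype V] (G : SimpleGraph V) (σ : Fin (Fintype.card V) ≃ V) (v : V) : Prop :=
  (σ.symm v).val = 0 ∧ ∃! w : V, FParent G σ v w

/-- `v` is an L-branch leaf: `v` is not the first vertex and is the L-parent of no vertex. -/
def LBranchLeaf [Fintype V] (G : SimpleGraph V) (σ : Fin (Fintype.card V) ≃ V) (v : V) : Prop :=
  (σ.symm v).val ≠ 0 ∧ ∀ w : V, ¬ LParent G σ v w

/-- `v` is the L-root leaf: `v` is the first vertex and is the L-parent of exactly one vertex. -/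
def LRootLeaf [Fintype V] (G : SimpleGraph V) (σ : Fin (Fintype.card V) ≃ V) (v : V) : Prop :=
  (σ.symm v).val = 0 ∧ ∃! w : V, LParent G σ v w

/-- `v` is an L-leaf: the L-root leaf or an L-branch leaf. -/
def LLeaf [Fintype V] (G : SimpleGraph V) (σ : Fin (Fintype.card V) ≃ V) (v : V) : Prop :=
  LRootLeaf G σ v ∨ LBranchLeaf G σ v

/-- `v` is the end-vertex (last vertex) of the ordering `σ`. -/
def IsEndVertex [Fintype V] (σ : Fin (Fintype.card V) ≃ V) (v : V) : Prop :=
  (σ.symm v).val = Fintype.card V - 1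

/-- `v` is a cut vertex: deleting `v` yields a disconnected graph. -/
def CutVertex (G : SimpleGraph V) (v : V) : Prop :=
  ¬ (G.induce {w : V | w ≠ v}).Connected

/-- A graph is chordal if every cycle of length at least 4 has a chord, i.e. an edge of the
graph joining two vertices of the cycle which is not an edge of the cycle. -/
def IsChordal (G : SimpleGraph V) : Prop :=
  ∀ ⦃v : V⦄ (w : G.Walk v v), w.IsCycle → 4 ≤ w.length →
    ∃ x y : V, x ∈ w.support ∧ y ∈ w.support ∧ G.Adj x y ∧ s(x, y) ∉ w.edges

set_option linter.unusedSectionVars false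

namespace Stmt18

variable {G : SimpleGraph V}


/-- Walk from `c (L-k)` to `c L` along consecutive vertices. -/
def pw (G : SimpleGraph V) (c : ℕ → V) (L : ℕ) (hadj : ∀ i < L, G.Adj (c i) (c (i+1))) :
    (k : ℕ) → k ≤ L → G.Walk (c (L - k)) (c L)
  | 0, _ => Walk.nil
  | (k+1), h =>
      Walk.cons (by
        have : G.Adj (c (L - (k+1))) (c (L - (k+1) + 1)) := hadj _ (by omega)
        have he : L - (k+1) + 1 = L - k := by omega
        rw [he] at this
        exact this) (pw G c L hadj k (by omega))

lemma pw_length (G : SimpleGraph V) (c : ℕ → V) (L : ℕ) (hadj) (k : ℕ) (h : k ≤ L) :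
    (pw G c L hadj k h).length = k := by
  induction k with
  | zero => rfl
  | succ k ih => simp [pw, ih (by omega)]

lemma pw_support (G : SimpleGraph V) (c : ℕ → V) (L : ℕ) (hadj) (k : ℕ) (h : k ≤ L) :
    (pw G c L hadj k h).support = (List.range (k+1)).map (fun t => c (L - k + t)) := by
  induction k with
  | zero => simp [pw, List.range_succ]
  | succ k ih =>
      rw [pw, Walk.support_cons, ih (by omega)]
      conv_rhs => rw [List.range_succ_eq_map]
      rw [List.map_cons, List.map_map]
      congr 1
      refine List.map_congr_left fun t ht => ?_
      simp only [Function.comp_apply]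
      congr 1
      omega

lemma pw_edges (G : SimpleGraph V) (c : ℕ → V) (L : ℕ) (hadj) (k : ℕ) (h : k ≤ L) :
    (pw G c L hadj k h).edges = (List.range k).map (fun t => s(c (L - k + t), c (L - k + t + 1))) := by
  induction k with
  | zero => simp [pw]
  | succ k ih =>
      rw [pw, Walk.edges_cons, ih (by omega)]
      conv_rhs => rw [List.range_succ_eq_map]
      rw [List.map_cons, List.map_map]
      congr 1
      · have he : L - (k + 1) + 0 + 1 = L - k := by omega
        have he2 : L - (k + 1) + 0 = L - (k + 1) := by omega
        rw [he, he2]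
      · refine List.map_congr_left fun t ht => ?_
        simp only [Function.comp_apply]
        have e1 : L - (k+1) + (t+1) = L - k + t := by omega
        rw [e1]

/-- No chordless cycle of length ≥ 4 in a chordal graph. -/
lemma no_induced_cycle {G : SimpleGraph V} (hch : IsChordal G) (L : ℕ) (hL : 3 ≤ L) (c : ℕ → V)
    (hadj : ∀ i < L, G.Adj (c i) (c (i+1)))
    (hclose : G.Adj (c L) (c 0))
    (hinj : ∀ i ≤ L, ∀ j ≤ L, c i = c j → i = j)
    (hgap : ∀ i j, i + 2 ≤ j → j ≤ L → ¬(i = 0 ∧ j = L) → ¬ G.Adj (c i) (c j)) : False := by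
  let p0 : G.Walk (c 0) (c L) := (pw G c L hadj L le_rfl).copy (by rw [Nat.sub_self]) rfl
  have hsupp : p0.support = (List.range (L+1)).map (fun t => c t) := by
    show ((pw G c L hadj L le_rfl).copy _ rfl).support = _
    rw [Walk.support_copy, pw_support]
    refine List.map_congr_left fun t ht => ?_
    congr 1
    omega
  have hedges : p0.edges = (List.range L).map (fun t => s(c t, c (t+1))) := by
    show ((pw G c L hadj L le_rfl).copy _ rfl).edges = _
    rw [Walk.edges_copy, pw_edges]
    refine List.map_congr_left fun t ht => ?_
    simp only [List.mem_range] at ht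
    have e1 : L - L + t = t := by omega
    rw [e1]
  
  have hlen : p0.length = L := by
    show ((pw G c L hadj L le_rfl).copy _ rfl).length = _
    rw [Walk.length_copy, pw_length]
  let W : G.Walk (c L) (c L) := Walk.cons hclose p0
  have hWcyc : W.IsCycle := by
    rw [Walk.cons_isCycle_iff]
    constructor
    · rw [Walk.isPath_def, hsupp]
      apply List.Nodup.map_on
      · intro i hi j hj hij
        simp only [List.mem_range] at hi hj
        exact hinj i (by omega) j (by omega) hij
      · exact List.nodup_range
    · rw [hedges]
      intro hmem
      simp only [List.mem_map, List.mem_range] at hmem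
      obtain ⟨t, ht, hts⟩ := hmem
      rw [Sym2.eq_iff] at hts
      rcases hts with ⟨h1, h2⟩ | ⟨h1, h2⟩
      · have : t = L := hinj t (by omega) L le_rfl h1
        omega
      · have h4 : t = 0 := hinj t (by omega) 0 (by omega) h1
        have h5 : t + 1 = L := hinj (t+1) (by omega) L le_rfl h2
        omega
  have hWlen : 4 ≤ W.length := by
    show 4 ≤ p0.length + 1
    omega
  obtain ⟨x, y, hx, hy, hxy, hno⟩ := hch W hWcyc hWlen
  have hWsupp : ∀ z ∈ W.support, ∃ i ≤ L, z = c i := by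
    intro z hz
    rw [Walk.support_cons, hsupp] at hz
    rcases List.mem_cons.mp hz with h | h
    · exact ⟨L, le_rfl, h⟩
    · simp only [List.mem_map, List.mem_range] at h
      obtain ⟨t, ht, htz⟩ := h
      exact ⟨t, by omega, htz.symm⟩
  obtain ⟨i, hi, rfl⟩ := hWsupp x hx
  obtain ⟨j, hj, rfl⟩ := hWsupp y hy
  have hWedges : ∀ t < L, s(c t, c (t+1)) ∈ W.edges := by
    intro t ht
    rw [Walk.edges_cons, hedges]
    exact List.mem_cons.mpr (Or.inr (List.mem_map.mpr ⟨t, List.mem_range.mpr ht, rfl⟩))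
  have hclosemem : s(c L, c 0) ∈ W.edges := by
    rw [Walk.edges_cons]
    exact List.mem_cons.mpr (Or.inl rfl)
  have key : ∀ a b : ℕ, a ≤ L → b ≤ L → a < b → G.Adj (c a) (c b) → s(c a, c b) ∈ W.edges := by
    intro a b ha hb hab hadj'
    rcases Nat.lt_or_ge (a+1) b with hlt | hge
    · by_cases hc : a = 0 ∧ b = L
      · rw [hc.1, hc.2, Sym2.eq_swap]
        exact hclosemem
      · exact absurd hadj' (hgap a b (by omega) hb hc)
    · have : b = a + 1 := by omega
      subst this
      exact hWedges a (by omega)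
  rcases Nat.lt_trichotomy i j with h | h | h
  · exact hno (key i j hi hj h hxy)
  · subst h; exact G.irrefl hxy
  · refine hno ?_
    rw [Sym2.eq_swap]
    exact key j i hj hi h hxy.symm



/-- BFS key function: `Kf G w t B ℓ x` is the sort key (within layer `ℓ`) of vertex `x`. -/
noncomputable def Kf (G : SimpleGraph V) (w : V) (t : V → ℕ) (B : ℕ) : ℕ → V → ℕ
  | 0, _ => 0
  | (ℓ+1), x => sInf ((Kf G w t B ℓ) '' {y | G.dist w y = ℓ ∧ G.Adj y x}) * B + t x

lemma Kf_zero (G : SimpleGraph V) (w : V) (t : V → ℕ) (B : ℕ) (x : V) :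
    Kf G w t B 0 x = 0 := rfl

lemma Kf_succ (G : SimpleGraph V) (w : V) (t : V → ℕ) (B : ℕ) (ℓ : ℕ) (x : V) :
    Kf G w t B (ℓ+1) x
      = sInf ((Kf G w t B ℓ) '' {y | G.dist w y = ℓ ∧ G.Adj y x}) * B + t x := rfl



/-- Every vertex at distance `ℓ+1` has a neighbor at distance `ℓ`. -/
lemma exists_parent (hG : G.Connected) (w x : V) (ℓ : ℕ) (hx : G.dist w x = ℓ + 1) :
    ∃ y, G.Adj y x ∧ G.dist w y = ℓ := by
  obtain ⟨p, hp⟩ := hG.exists_walk_length_eq_dist w x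
  rw [hx] at hp
  have hq := p.reverse
  cases hq' : p.reverse with
  | nil =>
      have : p.reverse.length = ℓ + 1 := by rw [Walk.length_reverse, hp]
      rw [hq'] at this
      simp at this
  | @cons _ y _ h r =>
      have hlen : p.reverse.length = ℓ + 1 := by rw [Walk.length_reverse, hp]
      rw [hq'] at hlen
      simp only [Walk.length_cons] at hlen
      have hry : G.dist w y ≤ ℓ := by
        have := SimpleGraph.dist_le r.reverse
        rw [Walk.length_reverse] at this
        omega
      have hxy : G.dist x y ≤ 1 := by
        have := SimpleGraph.dist_le (Walk.cons h Walk.nil)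
        simpa using this
      have htri : G.dist w x ≤ G.dist w y + G.dist y x := hG.dist_triangle
      have hcomm : G.dist y x = G.dist x y := SimpleGraph.dist_comm
      rw [hcomm] at htri
      have hge : G.dist w y = ℓ := by omega
      exact ⟨y, h.symm, hge⟩

lemma min_parent (hG : G.Connected) (w : V) (t : V → ℕ) (B : ℕ) (x : V) (ℓ : ℕ)
    (hx : G.dist w x = ℓ + 1) :
    ∃ y, G.Adj y x ∧ G.dist w y = ℓ ∧
      Kf G w t B (ℓ+1) x = Kf G w t B ℓ y * B + t x ∧
      ∀ y', G.Adj y' x → G.dist w y' = ℓ → Kf G w t B ℓ y ≤ Kf G w t B ℓ y' := by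
  obtain ⟨y0, hy0, hy0d⟩ := exists_parent hG w x ℓ hx
  have hne : ((Kf G w t B ℓ) '' {y | G.dist w y = ℓ ∧ G.Adj y x}).Nonempty :=
    ⟨Kf G w t B ℓ y0, ⟨y0, ⟨hy0d, hy0⟩, rfl⟩⟩
  obtain ⟨y, ⟨hyd, hyadj⟩, hyk⟩ := Nat.sInf_mem hne
  refine ⟨y, hyadj, hyd, ?_, ?_⟩
  · rw [Kf_succ, hyk]
  · intro y' h1 h2
    rw [hyk]
    exact Nat.sInf_le ⟨y', ⟨h2, h1⟩, rfl⟩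

/-- At layer one the key is the tiebreaker. -/
lemma Kf_one (hG : G.Connected) (w : V) (t : V → ℕ) (B : ℕ) (x : V)
    (hx : G.dist w x = 1) :
    Kf G w t B 1 x = t x := by
  have hadj : G.Adj w x := (SimpleGraph.dist_eq_one_iff_adj).mp hx
  have h0 : (0:ℕ) ∈ (Kf G w t B 0) '' {y | G.dist w y = 0 ∧ G.Adj y x} :=
    ⟨w, ⟨by simp, hadj⟩, rfl⟩
  have : sInf ((Kf G w t B 0) '' {y | G.dist w y = 0 ∧ G.Adj y x}) = 0 :=
    Nat.sInf_eq_zero.mpr (Or.inl h0)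
  rw [Kf_succ, this, Nat.zero_mul, Nat.zero_add]





variable [Fintype V] {σ : Fin (Fintype.card V) ≃ V}


variable [Fintype V] {σ : Fin (Fintype.card V) ≃ V}

lemma exists_fparent (hgs : IsGSOrdering G σ) (x : V) (hx : (σ.symm x).val ≠ 0) :
    ∃ p, G.Adj p x ∧ σ.symm p < σ.symm x ∧ ∀ y, G.Adj y x → σ.symm p ≤ σ.symm y := by
  classical
  obtain ⟨u0, hu0lt, hu0adj⟩ := hgs x hx
  have hne : (Finset.univ.filter fun y => G.Adj y x).Nonempty := ⟨u0, by simp [hu0adj]⟩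
  obtain ⟨p, hp, hpmin⟩ := Finset.exists_min_image _ (fun y => σ.symm y) hne
  simp only [Finset.mem_filter, Finset.mem_univ, true_and] at hp
  exact ⟨p, hp, lt_of_le_of_lt (hpmin u0 (by simp [hu0adj])) hu0lt,
    fun y hy => hpmin y (by simp [hy])⟩

/-- The descent: no "configuration" (induced path anchored at `v`, with both
endpoints being its two earliest vertices, earliest end at most at `w`'s position) exists. -/
lemma desc (hbfs : IsBFSOrdering G σ) (hch : IsChordal G) (v w : V)
    (hwv : G.Adj w v) (hwmin : ∀ y, G.Adj y v → σ.symm w ≤ σ.symm y) :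
    ∀ n0 : ℕ, ∀ (m : ℕ) (z : ℕ → V) (jv : ℕ),
    (σ.symm (z 0)).val = n0 → 3 ≤ m →
    (∀ i < m, G.Adj (z i) (z (i+1))) →
    (∀ i j, i + 2 ≤ j → j ≤ m → ¬ G.Adj (z i) (z j)) →
    (∀ i ≤ m, ∀ j ≤ m, z i = z j → i = j) →
    z jv = v → 1 ≤ jv → jv < m →
    σ.symm (z 0) < σ.symm (z m) →
    (∀ i, 1 ≤ i → i < m → σ.symm (z m) < σ.symm (z i)) →
    σ.symm (z 0) ≤ σ.symm w → False := by
  classical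
  intro n0
  induction n0 using Nat.strong_induction_on with
  | _ n0 IH =>
  intro m z jv hn0 hm hz_adj hz_gap hz_inj hjv hjv1 hjvm hends hintern hz0w
  -- strict minimality of z 0 among path vertices
  have hz0strict : ∀ i, 1 ≤ i → i ≤ m → σ.symm (z 0) < σ.symm (z i) := by
    intro i h1 h2
    rcases eq_or_lt_of_le h2 with h | h
    · subst h; exact hends
    · exact lt_trans hends (hintern i h1 h)
  -- z m is not the first vertex
  have hmnr : (σ.symm (z m)).val ≠ 0 := by
    have h2 : (σ.symm (z 0)).val < (σ.symm (z m)).val := Fin.lt_def.mp hends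
    omega
  -- ends are not adjacent
  have hz0m : ¬ G.Adj (z 0) (z m) := hz_gap 0 m (by omega) le_rfl
  -- 4-point
  obtain ⟨d, hdlt, hdadj⟩ := hbfs.2 (z 0) (z m) (z 1) hends
    (hintern 1 le_rfl (by omega)) (hz_adj 0 (by omega)) hz0m
  -- F-parent of z m
  obtain ⟨f, hfadj, _, hfmin⟩ := exists_fparent hbfs.1 (z m) hmnr
  have hf0 : σ.symm f < σ.symm (z 0) := lt_of_le_of_lt (hfmin d hdadj) hdlt
  have hfv : ¬ G.Adj f v := fun h => absurd (hwmin f h) (by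
    intro hle
    exact absurd (lt_of_lt_of_le hf0 hz0w) (not_lt.mpr hle))
  have hz0min : ∀ i ≤ m, σ.symm (z 0) ≤ σ.symm (z i) := by
    intro i hi
    rcases Nat.eq_zero_or_pos i with h | h
    · subst h; exact le_rfl
    · exact le_of_lt (hz0strict i h hi)
  have hfz : ∀ i ≤ m, f ≠ z i := by
    intro i hi h
    subst h
    exact absurd (hz0min i hi) (not_le.mpr hf0)
  -- the set of indices adjacent to f
  let S : Finset ℕ := (Finset.range (m+1)).filter (fun i => G.Adj f (z i))
  have hmS : m ∈ S := Finset.mem_filter.mpr ⟨Finset.mem_range.mpr (by omega), hfadj⟩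
  have hSmem : ∀ i, i ∈ S ↔ i ≤ m ∧ G.Adj f (z i) := by
    intro i
    simp only [S, Finset.mem_filter, Finset.mem_range]
    constructor
    · rintro ⟨h1, h2⟩; exact ⟨by omega, h2⟩
    · rintro ⟨h1, h2⟩; exact ⟨by omega, h2⟩
  -- no gaps in S
  have gapcontra : ∀ p ∈ S, ∀ q ∈ S, p + 2 ≤ q → (∀ t, p < t → t < q → t ∉ S) → False := by
    intro p hp q hq hpq hbetween
    rw [hSmem] at hp hq
    refine no_induced_cycle hch (q - p + 1) (by omega)
      (fun t => if t = 0 then f else z (p + t - 1)) ?_ ?_ ?_ ?_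
    · intro i hi
      rcases Nat.eq_zero_or_pos i with h | h
      · subst h
        simpa using hp.2
      · have h1 : i ≠ 0 := by omega
        have h2 : i + 1 ≠ 0 := by omega
        simp only [h1, h2, if_neg, if_false]
        have he : p + (i + 1) - 1 = (p + i - 1) + 1 := by omega
        rw [he]
        exact hz_adj (p + i - 1) (by omega)
    · have h1 : q - p + 1 ≠ 0 := by omega
      simp only [h1, if_neg, if_false, if_pos rfl]
      have he : p + (q - p + 1) - 1 = q := by omega
      rw [he]
      exact hq.2.symm
    · intro i hi j hj hij
      rcases Nat.eq_zero_or_pos i with h | h <;> rcases Nat.eq_zero_or_pos j with h' | h'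
      · omega
      · subst h
        simp only [if_pos rfl] at hij
        have h1 : j ≠ 0 := by omega
        simp only [if_neg h1] at hij
        exact absurd hij (hfz _ (by omega))
      · subst h'
        simp only [if_pos rfl] at hij
        have h1 : i ≠ 0 := by omega
        simp only [if_neg h1] at hij
        exact absurd hij.symm (hfz _ (by omega))
      · have h1 : i ≠ 0 := by omega
        have h2 : j ≠ 0 := by omega
        simp only [if_neg h1, if_neg h2] at hij
        have := hz_inj (p + i - 1) (by omega) (p + j - 1) (by omega) hij
        omega
    · intro i j hij hj hne
      rcases Nat.eq_zero_or_pos i with h | h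
      · subst h
        have h1 : j ≠ 0 := by omega
        simp only [if_pos rfl, if_neg h1]
        intro hadjf
        have hjq : p + j - 1 < q := by omega
        have hjp : p < p + j - 1 := by omega
        exact hbetween (p + j - 1) hjp hjq (by rw [hSmem]; exact ⟨by omega, hadjf⟩)
      · have h1 : i ≠ 0 := by omega
        have h2 : j ≠ 0 := by omega
        simp only [if_neg h1, if_neg h2]
        exact hz_gap (p + i - 1) (p + j - 1) (by omega) (by omega)
  -- S is upward closed from its minimum
  have hSne : S.Nonempty := ⟨m, hmS⟩
  set a := S.min' hSne with ha
  have haS : a ∈ S := S.min'_mem hSne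
  have hamin : ∀ t, t ∈ S → a ≤ t := fun t ht => S.min'_le t ht
  have haM : a ≤ m := (hSmem a).mp haS |>.1
  have hIval : ∀ t, a ≤ t → t ≤ m → t ∈ S := by
    intro t h1 h2
    by_contra ht
    have hat : a < t := lt_of_le_of_ne h1 (fun h => ht (h ▸ haS))
    have htm : t < m := lt_of_le_of_ne h2 (fun h => ht (h ▸ hmS))
    -- find consecutive pair around t
    let P := S.filter (· < t)
    let Q := S.filter (t < ·)
    have hPne : P.Nonempty := ⟨a, Finset.mem_filter.mpr ⟨haS, hat⟩⟩
    have hQne : Q.Nonempty := ⟨m, Finset.mem_filter.mpr ⟨hmS, htm⟩⟩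
    set p' := P.max' hPne with hp'
    set q' := Q.min' hQne with hq'
    have hp'S : p' ∈ S := (Finset.mem_filter.mp (P.max'_mem hPne)).1
    have hp't : p' < t := (Finset.mem_filter.mp (P.max'_mem hPne)).2
    have hq'S : q' ∈ S := (Finset.mem_filter.mp (Q.min'_mem hQne)).1
    have htq' : t < q' := (Finset.mem_filter.mp (Q.min'_mem hQne)).2
    refine gapcontra p' hp'S q' hq'S (by omega) ?_
    intro r hr1 hr2 hrS
    rcases Nat.lt_trichotomy r t with h | h | h
    · exact absurd (P.le_max' r (Finset.mem_filter.mpr ⟨hrS, h⟩)) (not_le.mpr hr1)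
    · exact ht (h ▸ hrS)
    · exact absurd (Q.min'_le r (Finset.mem_filter.mpr ⟨hrS, h⟩)) (not_le.mpr hr2)
  -- jv not in S, so a > jv
  have hjvS : jv ∉ S := by
    rw [hSmem]
    rintro ⟨-, h⟩
    rw [hjv] at h
    exact hfv h
  have hjva : jv < a := by
    by_contra h
    exact hjvS (hIval jv (by omega) (by omega))
  have ha2 : 2 ≤ a := by omega
  -- build new configuration
  have hfa : G.Adj f (z a) := ((hSmem a).mp haS).2
  have hnotS : ∀ t < a, ¬ G.Adj f (z t) := by
    intro t ht hadjf
    exact absurd (hamin t ((hSmem t).mpr ⟨by omega, hadjf⟩)) (not_le.mpr ht)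
  refine IH (σ.symm f).val (by omega) (a + 1)
    (fun t => if t = 0 then f else z (a + 1 - t)) (a + 1 - jv) ?_ (by omega) ?_ ?_ ?_ ?_ (by omega) (by omega) ?_ ?_ ?_
  · simp
  · -- adjacency
    intro i hi
    rcases Nat.eq_zero_or_pos i with h | h
    · subst h
      simpa using hfa
    · have h1 : i ≠ 0 := by omega
      have h2 : i + 1 ≠ 0 := by omega
      simp only [if_neg h1, if_neg h2]
      have he : a + 1 - i = (a + 1 - (i+1)) + 1 := by omega
      rw [he]
      exact (hz_adj (a + 1 - (i+1)) (by omega)).symm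
  · -- gaps
    intro i j hij hj
    rcases Nat.eq_zero_or_pos i with h | h
    · subst h
      have h1 : j ≠ 0 := by omega
      simp only [if_pos, if_neg h1]
      exact hnotS (a + 1 - j) (by omega)
    · have h1 : i ≠ 0 := by omega
      have h2 : j ≠ 0 := by omega
      simp only [if_neg h1, if_neg h2]
      intro hadjf
      exact hz_gap (a + 1 - j) (a + 1 - i) (by omega) (by omega) hadjf.symm
  · -- injectivity
    intro i hi j hj hij
    rcases Nat.eq_zero_or_pos i with h | h <;> rcases Nat.eq_zero_or_pos j with h' | h'
    · omega
    · subst h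
      have h1 : j ≠ 0 := by omega
      simp only [if_pos, if_neg h1] at hij
      exact absurd hij (hfz _ (by omega))
    · subst h'
      have h1 : i ≠ 0 := by omega
      simp only [if_pos, if_neg h1] at hij
      exact absurd hij.symm (hfz _ (by omega))
    · have h1 : i ≠ 0 := by omega
      have h2 : j ≠ 0 := by omega
      simp only [if_neg h1, if_neg h2] at hij
      have := hz_inj (a + 1 - i) (by omega) (a + 1 - j) (by omega) hij
      omega
  · -- the special vertex
    have h1 : a + 1 - jv ≠ 0 := by omega
    simp only [if_neg h1]
    have he : a + 1 - (a + 1 - jv) = jv := by omega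
    rw [he, hjv]
  · -- ends
    have h1 : a + 1 ≠ 0 := by omega
    simp only [if_pos, if_neg h1]
    have he : a + 1 - (a + 1) = 0 := by omega
    rw [he]
    exact hf0
  · -- internal vertices
    intro i h1i him
    have h1 : i ≠ 0 := by omega
    have h2 : a + 1 ≠ 0 := by omega
    simp only [if_neg h1, if_neg h2]
    have he : a + 1 - (a + 1) = 0 := by omega
    rw [he]
    exact hz0strict (a + 1 - i) (by omega) (by omega)
  · -- ≤ w
    simp only [if_pos]
    exact le_of_lt (lt_of_lt_of_le hf0 hz0w)




/-- A chordless 4-cycle is impossible: given the 4 path edges and the two missing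
diagonals, contradiction. -/
lemma no_c4 (hch : IsChordal G) (A B C D : V)
    (h01 : G.Adj A B) (h12 : G.Adj B C) (h23 : G.Adj C D) (h30 : G.Adj D A)
    (h02 : ¬ G.Adj A C) (h13 : ¬ G.Adj B D)
    (hAC : A ≠ C) (hBD : B ≠ D) : False := by
  refine no_induced_cycle hch 3 le_rfl
    (fun i => if i = 0 then A else if i = 1 then B else if i = 2 then C else D) ?_ ?_ ?_ ?_
  · intro i hi
    interval_cases i <;> simpa using ‹_›
  · simpa using h30
  · have n01 : A ≠ B := h01.ne
    have n12 : B ≠ C := h12.ne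
    have n23 : C ≠ D := h23.ne
    have n30 : D ≠ A := h30.ne
    intro i hi j hj hz
    interval_cases i <;> interval_cases j <;> simp_all
  · intro i j hij hj hne
    have : (i = 0 ∧ j = 2) ∨ (i = 1 ∧ j = 3) := by omega
    rcases this with ⟨rfl, rfl⟩ | ⟨rfl, rfl⟩ <;> simpa using ‹_›

/-- Starting configuration for the descent: a suitable induced 3-path through `v`. -/
lemma desc4 (hbfs : IsBFSOrdering G σ) (hch : IsChordal G) (v w : V)
    (hwv : G.Adj w v) (hwmin : ∀ y, G.Adj y v → σ.symm w ≤ σ.symm y)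
    (A B C D : V)
    (h01 : G.Adj A B) (h12 : G.Adj B C) (h23 : G.Adj C D)
    (h02 : ¬ G.Adj A C) (h03 : ¬ G.Adj A D) (h13 : ¬ G.Adj B D)
    (hAC : A ≠ C) (hAD : A ≠ D) (hBD : B ≠ D)
    (hv : B = v ∨ C = v)
    (hends : σ.symm A < σ.symm D) (hDB : σ.symm D < σ.symm B) (hDC : σ.symm D < σ.symm C)
    (hAw : σ.symm A ≤ σ.symm w) : False := by
  have n01 : A ≠ B := h01.ne
  have n12 : B ≠ C := h12.ne
  have n23 : C ≠ D := h23.ne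
  have main : ∀ jv : ℕ, 1 ≤ jv → jv < 3 →
      (if jv = 0 then A else if jv = 1 then B else if jv = 2 then C else D) = v → False := by
    intro jv hj1 hj3 hzjv
    refine desc hbfs hch v w hwv hwmin
      (σ.symm ((fun i => if i = 0 then A else if i = 1 then B else if i = 2 then C else D : ℕ → V) 0)).val 3
      (fun i => if i = 0 then A else if i = 1 then B else if i = 2 then C else D)
      jv rfl le_rfl ?_ ?_ ?_ hzjv hj1 hj3 ?_ ?_ ?_
    · intro i hi
      interval_cases i <;> simpa using ‹_›
    · intro i j hij hj
      have : (i = 0 ∧ j = 2) ∨ (i = 0 ∧ j = 3) ∨ (i = 1 ∧ j = 3) := by omega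
      rcases this with ⟨rfl, rfl⟩ | ⟨rfl, rfl⟩ | ⟨rfl, rfl⟩ <;> simpa using ‹_›
    · intro i hi j hj hz
      interval_cases i <;> interval_cases j <;> simp_all
    · simpa using hends
    · intro i h1i hi3
      interval_cases i <;> simpa using ‹_›
    · simpa using hAw
  rcases hv with hB | hC
  · exact main 1 (by omega) (by omega) (by simpa using hB)
  · exact main 2 (by omega) (by omega) (by simpa using hC)

/-- Forward direction core: a common neighbor of `u` and `w` other than `v` exists. -/
lemma common_nbr (hbfs : IsBFSOrdering G σ) (hch : IsChordal G) (v : V)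
    (hbl : FBranchLeaf G σ v) (w : V)
    (hwv : G.Adj w v) (hwlt : σ.symm w < σ.symm v)
    (hwmin : ∀ y, G.Adj y v → σ.symm w ≤ σ.symm y)
    (u : V) (hvu : G.Adj v u) (h1 : u ≠ w) (h2 : ¬ G.Adj w u) :
    ∃ x, x ≠ v ∧ G.Adj x u ∧ G.Adj x w := by
  by_contra hcomm
  push_neg at hcomm
  -- u is not the first vertex
  have hu0 : (σ.symm u).val ≠ 0 := by
    intro h0
    apply h1
    have hle : (σ.symm w).val ≤ (σ.symm u).val := hwmin u hvu.symm
    exact σ.symm.injective (Fin.ext (by omega))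
  -- F-parent of u
  obtain ⟨p, hpu, hplt, hpmin⟩ := exists_fparent hbfs.1 u hu0
  -- branch leaf gives p before v
  have hpv_lt : σ.symm p < σ.symm v := by
    have hnp := hbl.2 u
    rw [FParent] at hnp
    push_neg at hnp
    obtain ⟨y, hy1, hy2⟩ := hnp hu0 hvu
    exact lt_of_le_of_lt (hpmin y hy1) hy2
  have hpnv : p ≠ v := fun h => absurd hpv_lt (by rw [h]; exact lt_irrefl _)
  have hpw : p ≠ w := fun h => h2 (h ▸ hpu)
  have huv_ne : σ.symm u ≠ σ.symm v := fun h => G.irrefl (σ.symm.injective h ▸ hvu)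
  have hwu_lt : σ.symm w < σ.symm u :=
    lt_of_le_of_ne (hwmin u hvu.symm) (fun h => h1 (σ.symm.injective h.symm))
  rcases lt_or_gt_of_ne huv_ne with hlt | hgt
  · -- case u before v
    obtain ⟨d, hdlt, hdu⟩ := hbfs.2 w u v hwu_lt hlt hwv h2
    have hpltw : σ.symm p < σ.symm w := lt_of_le_of_lt (hpmin d hdu) hdlt
    have hpv : ¬ G.Adj p v := fun h => absurd (hwmin p h) (not_le.mpr hpltw)
    have hpw' : ¬ G.Adj p w := fun h => hcomm p hpnv hpu h
    exact desc4 hbfs hch v w hwv hwmin p u v w hpu hvu.symm hwv.symm hpv hpw'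
      (fun h => h2 h.symm) hpnv hpw h1 (Or.inr rfl) hpltw hwu_lt hwlt (le_of_lt hpltw)
  · -- case v before u
    have hwp_le : σ.symm w ≤ σ.symm p := by
      by_contra hcon
      push_neg at hcon
      have hpv : ¬ G.Adj p v := fun h => absurd (hwmin p h) (not_le.mpr hcon)
      obtain ⟨d, hdlt, hdv⟩ := hbfs.2 p v u (lt_trans hcon hwlt) hgt hpu hpv
      exact absurd (hwmin d hdv) (not_le.mpr (lt_trans hdlt hcon))
    have hwp_lt : σ.symm w < σ.symm p :=
      lt_of_le_of_ne hwp_le (fun h => hpw (σ.symm.injective h.symm))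
    by_cases hpv : G.Adj p v
    · -- p in N(v)
      by_cases hwp : G.Adj w p
      · exact hcomm p hpnv hpu hwp.symm
      · have hp0 : (σ.symm p).val ≠ 0 := by
          have := Fin.lt_def.mp hwp_lt
          omega
        obtain ⟨d, hdlt, hdp⟩ := hbfs.2 w p v hwp_lt hpv_lt hwv hwp
        obtain ⟨f, hfp, _, hfmin⟩ := exists_fparent hbfs.1 p hp0
        have hfw_lt : σ.symm f < σ.symm w := lt_of_le_of_lt (hfmin d hdp) hdlt
        have hfv : ¬ G.Adj f v := fun h => absurd (hwmin f h) (not_le.mpr hfw_lt)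
        have hfw_ne : f ≠ w := fun h => absurd hfw_lt (by rw [h]; exact lt_irrefl _)
        have hfv_ne : f ≠ v := fun h => absurd (lt_trans hfw_lt hwlt) (by rw [h]; exact lt_irrefl _)
        have hfw : ¬ G.Adj f w := by
          intro hfw
          exact no_c4 hch f p v w hfp hpv hwv.symm hfw.symm hfv
            (fun h => hwp h.symm) hfv_ne (fun h => lt_irrefl _ (h ▸ hwp_lt))
        exact desc4 hbfs hch v w hwv hwmin f p v w hfp hpv hwv.symm hfv hfw
          (fun h => hwp h.symm) hfv_ne hfw_ne
          (fun h => lt_irrefl _ (h ▸ hwp_lt))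
          (Or.inr rfl) hfw_lt hwp_lt hwlt (le_of_lt hfw_lt)
    · -- p not in N(v)
      by_cases hwp : G.Adj w p
      · exact hcomm p hpnv hpu hwp.symm
      · exact desc4 hbfs hch v w hwv hwmin w v u p hwv hvu hpu.symm h2 hwp
          (fun h => hpv h.symm) (fun h => h1 h.symm)
          (fun h => hpw h.symm) (fun h => hpnv h.symm)
          (Or.inl rfl) hwp_lt hpv_lt (lt_trans hpv_lt hgt) le_rfl

lemma forward (hch : IsChordal G) (hbfs : IsBFSOrdering G σ) (v : V) (hbl : FBranchLeaf G σ v) :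
    ∃ w : G.neighborSet v, ∀ u : G.neighborSet v,
      (G.induce (G.neighborSet v)).Reachable w u ∧ (G.induce (G.neighborSet v)).dist w u ≤ 2 := by
  obtain ⟨w, hwv, hwlt, hwmin⟩ := exists_fparent hbfs.1 v hbl.1
  have hwmem : w ∈ G.neighborSet v := hwv.symm
  refine ⟨⟨w, hwmem⟩, ?_⟩
  rintro ⟨u, hu⟩
  have hvu : G.Adj v u := hu
  by_cases h1 : u = w
  · subst h1
    refine ⟨Reachable.refl _, ?_⟩
    have h0 : (G.induce (G.neighborSet v)).dist ⟨u, hwmem⟩ ⟨u, hu⟩ = 0 :=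
      SimpleGraph.dist_self
    omega
  by_cases h2 : G.Adj w u
  · have hadj' : (G.induce (G.neighborSet v)).Adj ⟨w, hwmem⟩ ⟨u, hu⟩ := by
      exact h2
    exact ⟨hadj'.reachable,
      le_trans (SimpleGraph.dist_le (Walk.cons hadj' Walk.nil)) (by simp)⟩
  · obtain ⟨x, hxv_ne, hxu, hxw⟩ := common_nbr hbfs hch v hbl w hwv hwlt hwmin u hvu h1 h2
    have hxv : G.Adj x v := by
      by_contra hxv
      exact no_c4 hch x u v w hxu hvu.symm hwv.symm hxw.symm hxv (fun h => h2 h.symm) hxv_ne h1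
    have hxmem : x ∈ G.neighborSet v := hxv.symm
    have e1 : (G.induce (G.neighborSet v)).Adj ⟨w, hwmem⟩ ⟨x, hxmem⟩ := by simpa using hxw.symm
    have e2 : (G.induce (G.neighborSet v)).Adj ⟨x, hxmem⟩ ⟨u, hu⟩ := by simpa using hxu
    exact ⟨(Walk.cons e1 (Walk.cons e2 Walk.nil)).reachable,
      le_trans (SimpleGraph.dist_le (Walk.cons e1 (Walk.cons e2 Walk.nil))) (by simp)⟩
lemma backward (hG : G.Connected) (v w : V) (hvw : G.Adj v w)
    (hrad : ∀ u : G.neighborSet v,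
      (G.induce (G.neighborSet v)).Reachable ⟨w, hvw⟩ u ∧
      (G.induce (G.neighborSet v)).dist ⟨w, hvw⟩ u ≤ 2) :
    ∃ σ : Fin (Fintype.card V) ≃ V, IsBFSOrdering G σ ∧ FBranchLeaf G σ v := by
  classical
  set n := Fintype.card V with hn
  have hn0 : 0 < n := Fintype.card_pos_iff.mpr ⟨v⟩
  set e := Fintype.equivFin V with he
  set t : V → ℕ := fun x => if x = v then n else (e x).val with ht
  set B := n + 1 with hB
  have htB : ∀ x, t x < B := by
    intro x
    by_cases h : x = v
    · simp [ht, h, hB]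
    · simp only [ht, if_neg h, hB]
      have := (e x).isLt
      omega
  have htinj : Function.Injective t := by
    intro x y hxy
    by_cases hx : x = v <;> by_cases hy : y = v
    · rw [hx, hy]
    · exfalso; simp only [ht, if_pos hx, if_neg hy] at hxy
      have := (e y).isLt; omega
    · exfalso; simp only [ht, if_neg hx, if_pos hy] at hxy
      have := (e x).isLt; omega
    · simp only [ht, if_neg hx, if_neg hy] at hxy
      exact e.injective (Fin.ext hxy)
  have htv : ∀ x, x ≠ v → t x < t v := by
    intro x hx
    simp only [ht, if_neg hx, if_pos rfl]
    exact (e x).isLt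
  set g : V → ℕ ×ₗ ℕ := fun x => toLex (G.dist w x, Kf G w t B (G.dist w x) x) with hg
  have hd0 : ∀ x : V, G.dist w x = 0 ↔ w = x := fun x => hG.dist_eq_zero_iff
  have glt : ∀ x y : V, g x < g y ↔ (G.dist w x < G.dist w y ∨
      (G.dist w x = G.dist w y ∧
        Kf G w t B (G.dist w x) x < Kf G w t B (G.dist w y) y)) := by
    intro x y
    exact Prod.Lex.lt_iff
  -- injectivity of the key
  have hKmod : ∀ (x : V) (ℓ : ℕ), G.dist w x = ℓ + 1 → Kf G w t B (ℓ+1) x % B = t x := by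
    intro x ℓ hx
    rw [Kf_succ, Nat.mul_comm, Nat.mul_add_mod]
    exact Nat.mod_eq_of_lt (htB x)
  have hginj : Function.Injective g := by
    intro x y hxy
    have h1 : G.dist w x = G.dist w y ∧
        Kf G w t B (G.dist w x) x = Kf G w t B (G.dist w y) y := by
      have := congrArg ofLex hxy
      simp only [hg] at this
      exact ⟨congrArg Prod.fst this, congrArg Prod.snd this⟩
    obtain ⟨hd, hK⟩ := h1
    rcases Nat.eq_zero_or_pos (G.dist w x) with h | h
    · have hx : w = x := (hd0 x).mp h
      have hy : w = y := (hd0 y).mp (by omega)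
      rw [← hx, ← hy]
    · obtain ⟨ℓ, hℓ⟩ : ∃ ℓ, G.dist w x = ℓ + 1 := ⟨G.dist w x - 1, by omega⟩
      have hmx := hKmod x ℓ hℓ
      have hmy := hKmod y ℓ (by omega)
      have hdy : G.dist w y = ℓ + 1 := by omega
      rw [hℓ] at hK
      rw [hdy] at hK
      have hteq : t x = t y := by rw [← hmx, ← hmy, hK]
      exact htinj hteq
  letI lo : LinearOrder V := LinearOrder.lift' g hginj
  have hlo : ∀ x y : V, x < y ↔ g x < g y := fun x y => Iff.rfl
  set mo := monoEquivOfFin V hn.symm with hmo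
  set σ : Fin n ≃ V := mo.toEquiv with hσ
  have hlt : ∀ x y : V, σ.symm x < σ.symm y ↔ g x < g y := by
    intro x y
    rw [← hlo]
    exact mo.symm.lt_iff_lt
  have hgw : g w = toLex (0, 0) := by
    simp only [hg]
    have h1 : G.dist w w = 0 := SimpleGraph.dist_self
    rw [h1, Kf_zero]
  have hroot : ∀ x : V, x ≠ w → g w < g x := by
    intro x hx
    have hdx : G.dist w x ≠ 0 := fun h => hx ((hd0 x).mp h).symm
    rw [hgw, hg]
    rw [Prod.Lex.lt_iff]
    left
    simpa using Nat.pos_of_ne_zero hdx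
  have hpos0 : (σ.symm w).val = 0 := by
    have hle : σ.symm w ≤ ⟨0, hn0⟩ := by
      rcases eq_or_ne (σ ⟨0, hn0⟩) w with h | h
      · rw [← h, Equiv.symm_apply_apply]
      · have h2 : σ.symm w < σ.symm (σ ⟨0, hn0⟩) :=
          (hlt w (σ ⟨0, hn0⟩)).mpr (hroot (σ ⟨0, hn0⟩) h)
        rw [Equiv.symm_apply_apply] at h2
        exact le_of_lt h2
    exact Nat.le_zero.mp hle
  have hxw_of_pos : ∀ x : V, (σ.symm x).val ≠ 0 → x ≠ w := by
    intro x hx h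
    rw [h] at hx
    exact hx hpos0
  have hadj_dist : ∀ a c : V, G.Adj a c → G.dist w c ≤ G.dist w a + 1 := by
    intro a c h
    have h1 : G.dist a c ≤ 1 := by
      simpa using SimpleGraph.dist_le (Walk.cons h Walk.nil)
    have h2 : G.dist w c ≤ G.dist w a + G.dist a c := hG.dist_triangle
    omega
  -- GS ordering
  have hGS : IsGSOrdering G σ := by
    intro x hx0
    have hxw : x ≠ w := hxw_of_pos x hx0
    have hdx : G.dist w x ≠ 0 := fun h => hxw ((hd0 x).mp h).symm
    obtain ⟨ℓ, hℓ⟩ : ∃ ℓ, G.dist w x = ℓ + 1 := ⟨G.dist w x - 1, by omega⟩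
    obtain ⟨y, hyx, hyd, -, -⟩ := min_parent hG w t B x ℓ hℓ
    refine ⟨y, ?_, hyx⟩
    rw [hlt, glt]
    left
    omega
  -- BFS four-point property
  have hBFS2 : ∀ a b c : V, σ.symm a < σ.symm b → σ.symm b < σ.symm c →
      G.Adj a c → ¬ G.Adj a b → ∃ d : V, σ.symm d < σ.symm a ∧ G.Adj d b := by
    intro a b c hab hbc hac hnab
    rw [hlt] at hab hbc
    have hbw : b ≠ w := by
      intro h
      subst h
      rcases eq_or_ne a b with h' | h'
      · exact lt_irrefl _ (h' ▸ hab)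
      · exact lt_asymm hab (hroot a h')
    have hcw : c ≠ w := by
      intro h
      subst h
      rcases eq_or_ne b c with h' | h'
      · exact lt_irrefl _ (h' ▸ hbc)
      · exact lt_asymm hbc (hroot b h')
    have hdb_pos : G.dist w b ≠ 0 := fun h => hbw ((hd0 b).mp h).symm
    have hab' := (glt a b).mp hab
    have hbc' := (glt b c).mp hbc
    have hdab : G.dist w a ≤ G.dist w b := by rcases hab' with h | ⟨h, -⟩ <;> omega
    have hdbc : G.dist w b ≤ G.dist w c := by rcases hbc' with h | ⟨h, -⟩ <;> omega
    have hdca : G.dist w c ≤ G.dist w a + 1 := hadj_dist a c hac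
    obtain ⟨ℓ, hℓ⟩ : ∃ ℓ, G.dist w b = ℓ + 1 := ⟨G.dist w b - 1, by omega⟩
    obtain ⟨y, hyb, hyd, hkb, hymin⟩ := min_parent hG w t B b ℓ hℓ
    rcases eq_or_lt_of_le hdab with hcase | hcase
    · -- same layer: the parent of b is in an earlier layer
      refine ⟨y, ?_, hyb⟩
      rw [hlt, glt]
      left
      omega
    · -- b one layer after a : compare keys
      have hda : G.dist w a = ℓ := by omega
      have hdc : G.dist w c = ℓ + 1 := by omega
      have hKlt : Kf G w t B (ℓ+1) b < Kf G w t B (ℓ+1) c := by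
        rcases hbc' with h | ⟨h, hk⟩
        · omega
        · rw [hℓ] at hk
          rw [hdc] at hk
          exact hk
      obtain ⟨y2, hy2c, hy2d, hkc, hy2min⟩ := min_parent hG w t B c ℓ hdc
      rw [hkb, hkc] at hKlt
      have hmul : Kf G w t B ℓ y ≤ Kf G w t B ℓ y2 := by
        by_contra hcon
        push_neg at hcon
        have h1 : (Kf G w t B ℓ y2 + 1) * B ≤ Kf G w t B ℓ y * B :=
          Nat.mul_le_mul_right _ (by omega)
        have h2 : Kf G w t B ℓ y2 * B + B = (Kf G w t B ℓ y2 + 1) * B := by ring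
        have htb := htB b
        have htc := htB c
        omega
      have hy2a : Kf G w t B ℓ y2 ≤ Kf G w t B ℓ a := hy2min a hac hda
      have hyne : y ≠ a := fun h => hnab (h ▸ hyb)
      have hKne : Kf G w t B ℓ y ≠ Kf G w t B ℓ a := by
        intro heq
        apply hyne
        apply hginj
        show toLex (G.dist w y, Kf G w t B (G.dist w y) y)
          = toLex (G.dist w a, Kf G w t B (G.dist w a) a)
        rw [hyd, hda, heq]
      refine ⟨y, ?_, hyb⟩
      rw [hlt, glt]
      right
      constructor
      · omega
      · rw [hyd, hda]
        omega
  -- v is a branch leaf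
  have hvw_ne : v ≠ w := hvw.ne
  have hdv : G.dist w v = 1 := SimpleGraph.dist_eq_one_iff_adj.mpr hvw.symm
  have hposv : (σ.symm v).val ≠ 0 := by
    intro h
    apply hvw_ne
    apply σ.symm.injective
    apply Fin.ext
    rw [h, hpos0]
  refine ⟨σ, ⟨hGS, hBFS2⟩, hposv, ?_⟩
  rintro u ⟨hu0, hvu, humin⟩
  have hunw : u ≠ w := hxw_of_pos u hu0
  have hdu_pos : G.dist w u ≠ 0 := fun h => hunw ((hd0 u).mp h).symm
  have hdu_le : G.dist w u ≤ 2 := by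
    have := hadj_dist v u hvu
    omega
  -- a neighbour of u strictly before v in the order contradicts minimality
  have contra : ∀ x : V, G.Adj x u → g x < g v → False := by
    intro x hxu hgx
    have h1 : σ.symm v ≤ σ.symm x := humin x hxu
    have h2 : σ.symm x < σ.symm v := (hlt x v).mpr hgx
    exact absurd h1 (not_le.mpr h2)
  rcases Nat.lt_or_ge (G.dist w u) 2 with hcase | hcase
  · -- distance 1 : w itself is an earlier neighbour
    have hd1 : G.dist w u = 1 := by omega
    have hadjwu : G.Adj w u := SimpleGraph.dist_eq_one_iff_adj.mp hd1
    exact contra w hadjwu (hroot v hvw_ne)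
  · -- distance 2 : use the radius hypothesis
    have hd2 : G.dist w u = 2 := by omega
    have hnadj : ¬ G.Adj w u := by
      intro h
      have : G.dist w u ≤ 1 := by
        simpa using SimpleGraph.dist_le (Walk.cons h Walk.nil)
      omega
    have humem : u ∈ G.neighborSet v := hvu
    obtain ⟨hreach, hdle⟩ := hrad ⟨u, humem⟩
    have hne' : (⟨w, hvw⟩ : G.neighborSet v) ≠ ⟨u, humem⟩ := by
      intro h
      exact hunw (congrArg Subtype.val h).symm
    have hdi0 : (G.induce (G.neighborSet v)).dist ⟨w, hvw⟩ ⟨u, humem⟩ ≠ 0 :=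
      fun h => hne' (hreach.dist_eq_zero_iff.mp h)
    have hdi1 : (G.induce (G.neighborSet v)).dist ⟨w, hvw⟩ ⟨u, humem⟩ ≠ 1 := by
      intro h
      have hadj' : (G.induce (G.neighborSet v)).Adj ⟨w, hvw⟩ ⟨u, humem⟩ :=
        SimpleGraph.dist_eq_one_iff_adj.mp h
      exact hnadj hadj'
    have hdeq : (G.induce (G.neighborSet v)).dist ⟨w, hvw⟩ ⟨u, humem⟩ = 2 := by omega
    obtain ⟨p, hp⟩ := hreach.exists_walk_length_eq_dist
    rw [hdeq] at hp
    have ha1 : (G.induce (G.neighborSet v)).Adj ⟨w, hvw⟩ (p.getVert 1) := by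
      have h2 := p.adj_getVert_succ (i := 0) (by omega)
      rwa [Walk.getVert_zero] at h2
    have ha2 : (G.induce (G.neighborSet v)).Adj (p.getVert 1) ⟨u, humem⟩ := by
      have h2 := p.adj_getVert_succ (i := 1) (by omega)
      have h3 : p.getVert 2 = ⟨u, humem⟩ := by
        rw [← hp]
        exact Walk.getVert_length p
      rwa [h3] at h2
    set x : V := (p.getVert 1).val with hx
    have hxw : G.Adj w x := ha1
    have hxu : G.Adj x u := ha2
    have hxv_mem : G.Adj v x := (p.getVert 1).2
    have hxnv : x ≠ v := hxv_mem.ne'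
    have hdx : G.dist w x = 1 := SimpleGraph.dist_eq_one_iff_adj.mpr hxw
    refine contra x hxu ?_
    rw [glt]
    right
    refine ⟨by omega, ?_⟩
    rw [hdx, hdv, Kf_one hG w t B x hdx, Kf_one hG w t B v hdv]
    exact htv x hxnv

end Stmt18

/-- In a connected chordal graph with at least two vertices, `v` is an
F-branch leaf of some BFS ordering iff `G[N(v)]` has radius at most two. -/
theorem stmt18 [Fintype V] (G : SimpleGraph V)
    (hG : G.Connected) (hch : IsChordal G) (hn : 2 ≤ Fintype.card V) (v : V) :
    (∃ σ : Fin (Fintype.card V) ≃ V, IsBFSOrdering G σ ∧ FBranchLeaf G σ v) ↔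
      ∃ w : G.neighborSet v, ∀ u : G.neighborSet v,
        (G.induce (G.neighborSet v)).Reachable w u ∧
        (G.induce (G.neighborSet v)).dist w u ≤ 2 := by
  constructor
  · rintro ⟨σ, hbfs, hbl⟩
    exact Stmt18.forward hch hbfs v hbl
  · rintro ⟨⟨w, hw⟩, hrad⟩
    exact Stmt18.backward hG v w hw hrad
end

section
/- Let G be a connected split graph with at least 2 vertices, i.e., a connected finite simple graph whose vertex set can be partitioned into a clique C and an independent set I, and let v be a vertex of G. Then v is an F-branch leaf of some DFS ordering of G if and only if v is not a cut vertex of G. -/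
open SimpleGraph

variable {V : Type*}

/-!
If `v` is an F-branch leaf of a search ordering, then the F-parent of every vertex other than
the first is an earlier vertex different from `v`, so following F-parents joins every vertex of
`G - v` to the first vertex inside `G - v`.

Conversely, when `G - v` is connected, one finds a split partition whose clique `D` dominates
the independent set and, if `v ∈ D`, contains a vertex other than `v` and a second
`D`-neighbour of every independent neighbour of `v`. List `D` first with `v` last among it,
then the independent vertices by decreasing latest neighbour in `D`. This is a DFS ordering:
in a violating triple `a < b < c`, `a ∈ D` and `b, c ∉ D`, and the latest `D`-neighbour of
`b` lies strictly between `a` and `b`. Every neighbour of `v` has a neighbour earlier than `v`,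
so `v` is nobody's F-parent.
-/

lemma val_symm_ne_zero_iff_exists_lt {n : ℕ} (σ : Fin n ≃ V) (x : V) :
    (σ.symm x).val ≠ 0 ↔ ∃ y, σ.symm y < σ.symm x := by
  constructor
  · intro hx
    exact ⟨σ ⟨0, (σ.symm x).pos⟩, Fin.lt_def.2 (by simpa using Nat.pos_of_ne_zero hx)⟩
  · rintro ⟨y, hy⟩
    have := Fin.lt_def.1 hy
    omega

lemma exists_equiv_fin_lt_iff [Fintype V] {α : Type*} [LinearOrder α] (f : V → α)
    (hf : f.Injective) :
    ∃ σ : Fin (Fintype.card V) ≃ V, ∀ x y, σ.symm x < σ.symm y ↔ f x < f y := by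
  let : LinearOrder V := LinearOrder.lift' f hf
  exact ⟨(monoEquivOfFin V rfl).toEquiv, fun _ _ => (monoEquivOfFin V rfl).symm.lt_iff_lt⟩

lemma exists_injective_nat_lt_of_ne [Fintype V] (v : V) :
    ∃ ρ : V → ℕ, ρ.Injective ∧ ∀ x ≠ v, ρ x < ρ v := by
  classical
  let e := Fintype.equivFin V
  refine ⟨fun x => if x = v then Fintype.card V else e x, fun x y hxy => ?_, fun x hx => ?_⟩
  · by_cases hx : x = v <;> by_cases hy : y = v <;> simp only [hx, hy, if_true, if_false] at hxy
    · exact hx.trans hy.symm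
    · exact absurd hxy.symm (e y).isLt.ne
    · exact absurd hxy (e x).isLt.ne
    · exact e.injective (Fin.ext hxy)
  · simp [hx]

section Search

variable [Fintype V] {G : SimpleGraph V} {σ : Fin (Fintype.card V) ≃ V}

lemma IsGSOrdering.exists_fParent (hσ : IsGSOrdering G σ) {w : V} (hw : (σ.symm w).val ≠ 0) :
    ∃ p, FParent G σ p w ∧ σ.symm p < σ.symm w := by
  classical
  obtain ⟨u, hu, huw⟩ := hσ w hw
  obtain ⟨p, hp, hmin⟩ :=
    Finset.exists_min_image (Finset.univ.filter (G.Adj · w)) σ.symm ⟨u, by simpa using huw⟩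
  simp only [Finset.mem_filter, Finset.mem_univ, true_and] at hp hmin
  exact ⟨p, ⟨hw, hp, hmin⟩, (hmin u huw).trans_lt hu⟩

lemma FBranchLeaf.not_cutVertex {v : V} (hσ : IsGSOrdering G σ) (hv : FBranchLeaf G σ v) :
    ¬ CutVertex G v := by
  have hpos : 0 < Fintype.card V := (σ.symm v).pos
  set root := σ ⟨0, hpos⟩
  have hroot : root ≠ v := by
    rintro h
    exact hv.1 (by simp [← h, root])
  have reach : ∀ i, ∀ hi : σ i ≠ v,
      (G.induce {w | w ≠ v}).Reachable ⟨σ i, hi⟩ ⟨root, hroot⟩ := by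
    intro i
    induction i using WellFoundedLT.induction with
    | _ i ih =>
      intro hi
      by_cases h0 : i.val = 0
      · obtain rfl : i = ⟨0, hpos⟩ := Fin.ext h0
        rfl
      · obtain ⟨p, hp, hlt⟩ := hσ.exists_fParent (w := σ i) (by simpa using h0)
        have hpv : p ≠ v := by
          rintro rfl
          exact hv.2 _ hp
        have hip : (G.induce {w | w ≠ v}).Adj ⟨σ i, hi⟩ ⟨p, hpv⟩ := hp.2.1.symm
        exact hip.reachable.trans (by simpa using ih (σ.symm p) (by simpa using hlt) (by simpa))
  rw [CutVertex, not_not, connected_iff_exists_forall_reachable]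
  refine ⟨⟨root, hroot⟩, fun ⟨w, hw⟩ => ?_⟩
  simpa using (reach (σ.symm w) (by simpa)).symm

end Search

section CliqueFirst

variable [Fintype V] {G : SimpleGraph V} {D : Set V} {σ : Fin (Fintype.card V) ≃ V}

lemma isGSOrdering_of_clique_first (hD : G.IsClique D) (hdom : ∀ u ∉ D, ∃ d ∈ D, G.Adj d u)
    (hfirst : ∀ x ∈ D, ∀ y ∉ D, σ.symm x < σ.symm y) : IsGSOrdering G σ := by
  intro w hw
  by_cases hwD : w ∈ D
  · obtain ⟨y, hyw⟩ := (val_symm_ne_zero_iff_exists_lt σ w).1 hw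
    have hyD : y ∈ D := by
      by_contra hyD
      exact (hfirst w hwD y hyD).not_gt hyw
    exact ⟨y, hyw, hD hyD hwD (by rintro rfl; exact hyw.false)⟩
  · obtain ⟨d, hdD, hdw⟩ := hdom w hwD
    exact ⟨d, hfirst d hdD w hwD, hdw⟩

lemma isDFSOrdering_of_clique_first (hD : G.IsClique D)
    (hDc : ∀ a b, a ∉ D → b ∉ D → ¬ G.Adj a b) (hdom : ∀ u ∉ D, ∃ d ∈ D, G.Adj d u)
    (hfirst : ∀ x ∈ D, ∀ y ∉ D, σ.symm x < σ.symm y)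
    (hlatest : ∀ b c, b ∉ D → c ∉ D → σ.symm b < σ.symm c →
      ∀ a ∈ D, G.Adj a c → ∃ d ∈ D, G.Adj d b ∧ σ.symm a ≤ σ.symm d) :
    IsDFSOrdering G σ := by
  refine ⟨isGSOrdering_of_clique_first hD hdom hfirst, fun a b c hab hbc hac hnab => ?_⟩
  have hfirst' : ∀ x y, σ.symm x < σ.symm y → y ∈ D → x ∈ D := fun x y hxy hy => by
    by_contra hx
    exact (hfirst y hy x hx).not_gt hxy
  have hcD : c ∉ D := fun hcD =>
    hnab (hD (hfirst' a c (hab.trans hbc) hcD) (hfirst' b c hbc hcD)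
      (by rintro rfl; exact hab.false))
  have haD : a ∈ D := by
    by_contra haD
    exact hDc a c haD hcD hac
  have hbD : b ∉ D := fun hbD => hnab (hD haD hbD (by rintro rfl; exact hab.false))
  obtain ⟨d, hdD, hdb, had⟩ := hlatest b c hbD hcD hbc a haD hac
  have had' : σ.symm a < σ.symm d := had.lt_of_ne fun h => hnab (σ.symm.injective h ▸ hdb)
  exact ⟨d, had', hfirst d hdD b hbD, hdb⟩

lemma fBranchLeaf_of_last_in_set {v : V} (hσ : IsGSOrdering G σ)
    (hlast : ∀ x ∈ D, x ≠ v → σ.symm x < σ.symm v) (hv : ∃ d ∈ D, d ≠ v)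
    (hvD : ∀ u ∉ D, G.Adj v u → ∃ d ∈ D, d ≠ v ∧ G.Adj d u) : FBranchLeaf G σ v := by
  obtain ⟨d, hdD, hdv⟩ := hv
  refine ⟨(val_symm_ne_zero_iff_exists_lt σ v).2 ⟨d, hlast d hdD hdv⟩,
    fun w ⟨hw, hvw, hmin⟩ => ?_⟩
  by_cases hwD : w ∈ D
  · obtain ⟨y, hyw, hy⟩ := hσ w hw
    exact ((hmin y hy).trans_lt (hyw.trans (hlast w hwD hvw.ne.symm))).false
  · obtain ⟨d', hd'D, hd'v, hd'w⟩ := hvD w hwD hvw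
    exact ((hmin d' hd'w).trans_lt (hlast d' hd'D hd'v)).false

lemma exists_ordering_clique_first (G : SimpleGraph V) (D : Set V) (v : V)
    (hdom : ∀ u ∉ D, ∃ d ∈ D, G.Adj d u) :
    ∃ σ : Fin (Fintype.card V) ≃ V,
      (∀ x ∈ D, ∀ y ∉ D, σ.symm x < σ.symm y) ∧
      (∀ x ∈ D, x ≠ v → σ.symm x < σ.symm v) ∧
      (∀ b c, b ∉ D → c ∉ D → σ.symm b < σ.symm c →
        ∀ a ∈ D, G.Adj a c → ∃ d ∈ D, G.Adj d b ∧ σ.symm a ≤ σ.symm d) := by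
  classical
  obtain ⟨ρ, hρ, hρv⟩ := exists_injective_nat_lt_of_ne v
  let nbrs : V → Finset V := fun x => Finset.univ.filter fun d => d ∈ D ∧ G.Adj d x
  let latest : V → ℕ := fun x => (nbrs x).sup ρ
  have hlatest : ∀ x, latest x ≤ ρ v := fun x => Finset.sup_le fun d _ => by
    by_cases hd : d = v
    · rw [hd]
    · exact (hρv d hd).le
  -- `D` is block `0`; outside `D`, a later latest `D`-neighbour means an earlier block, and
  -- `latest x ≤ ρ v` keeps the truncated subtraction at least `1`.
  let block : V → ℕ := fun x => if x ∈ D then 0 else ρ v + 1 - latest x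
  let key : V → ℕ ×ₗ ℕ := fun x => toLex (block x, ρ x)
  have hkey : key.Injective := fun x y h => hρ (Prod.ext_iff.1 (toLex_inj.1 h)).2
  obtain ⟨σ, hσ⟩ := exists_equiv_fin_lt_iff key hkey
  have hσ' : ∀ x y, σ.symm x < σ.symm y ↔
      block x < block y ∨ block x = block y ∧ ρ x < ρ y := fun x y =>
    (hσ x y).trans Prod.Lex.toLex_lt_toLex
  have hblockD : ∀ x ∈ D, block x = 0 := fun x hx => if_pos hx
  have hblock : ∀ x ∉ D, block x = ρ v + 1 - latest x := fun x hx => if_neg hx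
  refine ⟨σ, fun x hx y hy => ?_, fun x hx hxv => ?_, fun b c hb hc hbc a ha hac => ?_⟩
  · rw [hσ', hblockD x hx, hblock y hy]
    have := hlatest y
    omega
  · by_cases hv : v ∈ D
    · exact (hσ' x v).2 (Or.inr ⟨by rw [hblockD x hx, hblockD v hv], hρv x hxv⟩)
    · rw [hσ', hblockD x hx, hblock v hv]
      have := hlatest v
      omega
  · have hcb : latest c ≤ latest b := by
      have := hlatest b
      have := hlatest c
      rw [hσ', hblock b hb, hblock c hc] at hbc
      omega
    obtain ⟨u, hu, hnu⟩ := hdom b hb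
    obtain ⟨d, hd, hdmax⟩ :=
      Finset.exists_mem_eq_sup (nbrs b) ⟨u, by simp [nbrs, hu, hnu]⟩ ρ
    simp only [nbrs, Finset.mem_filter, Finset.mem_univ, true_and] at hd
    have had : ρ a ≤ ρ d := calc
      ρ a ≤ latest c := Finset.le_sup (by simp [nbrs, ha, hac])
      _ ≤ latest b := hcb
      _ = ρ d := hdmax
    refine ⟨d, hd.1, hd.2, ?_⟩
    rw [← not_lt, hσ', hblockD a ha, hblockD d hd.1]
    omega

end CliqueFirst

lemma exists_adj_ne_of_not_cutVertex {G : SimpleGraph V} {v a b : V} (hv : ¬ CutVertex G v)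
    (ha : a ≠ v) (hb : b ≠ v) (hab : a ≠ b) : ∃ z ≠ v, G.Adj a z := by
  have : Nontrivial {w | w ≠ v} := nontrivial_of_ne ⟨a, ha⟩ ⟨b, hb⟩ (by simpa)
  obtain ⟨⟨z, hz⟩, haz⟩ := (not_not.1 hv).preconnected.exists_adj_of_nontrivial ⟨a, ha⟩
  exact ⟨z, hz, haz⟩

lemma exists_dominating_clique_of_not_cutVertex {G : SimpleGraph V} {C : Set V} {v : V}
    (hG : G.Connected) (hC : G.IsClique C) (hCc : ∀ a b, a ∉ C → b ∉ C → ¬ G.Adj a b)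
    (hv : ¬ CutVertex G v) :
    ∃ D : Set V, G.IsClique D ∧ (∀ a b, a ∉ D → b ∉ D → ¬ G.Adj a b) ∧
      (∀ u ∉ D, ∃ d ∈ D, G.Adj d u) ∧ (∃ d ∈ D, d ≠ v) ∧
      ∀ u ∉ D, G.Adj v u → ∃ d ∈ D, d ≠ v ∧ G.Adj d u := by
  obtain ⟨⟨u, hu⟩⟩ := (not_not.1 hv).nonempty
  have : Nontrivial V := nontrivial_of_ne u v hu
  have hnbr : ∀ x, ∃ y, G.Adj x y := hG.preconnected.exists_adj_of_nontrivial
  have hdom : ∀ x ∉ C, ∃ d ∈ C, G.Adj d x := fun x hx => by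
    obtain ⟨y, hxy⟩ := hnbr x
    exact ⟨y, by_contra fun hy => hCc x y hx hy hxy, hxy.symm⟩
  by_cases hvC : v ∈ C
  · by_cases hC' : ∃ d ∈ C, d ≠ v
    · refine ⟨C, hC, hCc, hdom, hC', fun w hw _ => ?_⟩
      obtain ⟨d, hd, hdv⟩ := hC'
      obtain ⟨z, hzv, hwz⟩ := exists_adj_ne_of_not_cutVertex hv
        (ne_of_mem_of_not_mem hvC hw).symm hdv (ne_of_mem_of_not_mem hd hw).symm
      exact ⟨z, by_contra fun hz => hCc w z hw hz hwz, hzv, hwz.symm⟩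
    · -- `C = {v}`, and then `G - v` is edgeless and connected, so `V = {u, v}`
      push Not at hC'
      have hout : ∀ x ∉ ({u} : Set V), x = v := fun x hx => by
        by_contra hxv
        obtain ⟨z, hzv, hxz⟩ := exists_adj_ne_of_not_cutVertex hv hxv hu hx
        exact hCc x z (mt (hC' x) hxv) (mt (hC' z) hzv) hxz
      refine ⟨{u}, Set.pairwise_singleton u G.Adj, fun a b ha hb => ?_, fun x hx => ?_,
        ⟨u, rfl, hu⟩, fun w hw hvw => ?_⟩
      · rw [hout a ha, hout b hb]
        exact G.irrefl
      · obtain ⟨y, hxy⟩ := hnbr x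
        obtain rfl := hout x hx
        have hyu : y = u := by_contra fun hy => G.ne_of_adj hxy (hout y hy).symm
        exact ⟨u, rfl, hyu ▸ hxy.symm⟩
      · exact (G.ne_of_adj hvw (hout w hw).symm).elim
  · obtain ⟨d, hd, hdv⟩ := hdom v hvC
    exact ⟨C, hC, hCc, hdom, ⟨d, hd, ne_of_mem_of_not_mem hd hvC⟩,
      fun w hw hvw => (hCc v w hvC hw hvw).elim⟩

theorem stmt19_general [Fintype V] (G : SimpleGraph V)
    (hG : G.Connected)
    (hsplit : ∃ C I : Set V, Disjoint C I ∧ C ∪ I = Set.univ ∧ G.IsClique C ∧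
      ∀ a ∈ I, ∀ b ∈ I, ¬ G.Adj a b)
    (v : V) :
    (∃ σ : Fin (Fintype.card V) ≃ V, IsDFSOrdering G σ ∧ FBranchLeaf G σ v) ↔
      ¬ CutVertex G v := by
  refine ⟨fun ⟨σ, hσ, hv⟩ => hv.not_cutVertex hσ.1, fun hv => ?_⟩
  obtain ⟨C, I, -, hcover, hC, hI⟩ := hsplit
  have hCc : ∀ a b, a ∉ C → b ∉ C → ¬ G.Adj a b := by
    have hmemI : ∀ a ∉ C, a ∈ I := fun a ha =>
      (hcover.symm ▸ Set.mem_univ a : a ∈ C ∪ I).resolve_left ha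
    exact fun a b ha hb => hI a (hmemI a ha) b (hmemI b hb)
  obtain ⟨D, hD, hDc, hdom, hvD, hvnbr⟩ :=
    exists_dominating_clique_of_not_cutVertex hG hC hCc hv
  obtain ⟨σ, hfirst, hlast, hlatest⟩ := exists_ordering_clique_first G D v hdom
  have hσ := isDFSOrdering_of_clique_first hD hDc hdom hfirst hlatest
  exact ⟨σ, hσ, fBranchLeaf_of_last_in_set hσ.1 hlast hvD hvnbr⟩

/-- In a connected split graph with at least two vertices, `v` is an
F-branch leaf of some DFS ordering iff `v` is not a cut vertex. -/
theorem stmt19 [Fintype V] (G : SimpleGraph V)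
    (hG : G.Connected) (hn : 2 ≤ Fintype.card V)
    (hsplit : ∃ C I : Set V, Disjoint C I ∧ C ∪ I = Set.univ ∧ G.IsClique C ∧
      ∀ a ∈ I, ∀ b ∈ I, ¬ G.Adj a b)
    (v : V) :
    (∃ σ : Fin (Fintype.card V) ≃ V, IsDFSOrdering G σ ∧ FBranchLeaf G σ v) ↔
      ¬ CutVertex G v :=
  stmt19_general G hG hsplit v
end
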